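/- Let H ∈ (0,1) and let ε be a real number with 0 < ε < 1/(2H). Then the integral ∫₀^{π/4} (φ_H(cos θ, sin θ))^{ε − 1/(2H)} dθ is finite. -/

import Mathlib

/-!
Write `u = cos θ`, `v = sin θ`, `s = u - v`, so `u = v + s`. With `a = u ^ H`, `b = v ^ H`,
`c = s ^ H`, the quantity `4 φ_H(u, v)` is Heron's product
`(c + b - a)(c + a - b)(a + b - c)(a + b + c)`.
Concavity of `x ↦ x ^ H` gives `c + b - a ≥ (2 - 2 ^ H) min(v, s) ^ H`, and the other three factors
are at least `c`, `b` and `1/2`; hence `φ_H(cos θ, sin θ) ≳ (v s) ^ (2H) ≳ (θ (π/4 - θ)) ^ (2H)`.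
Raised to the negative power `ε - 1/(2H)` this gives the integrable majorant
`(θ (π/4 - θ)) ^ (2Hε - 1)`, with exponent `> -1`.
-/

open MeasureTheory Set Real

/-- `φ_H(u,v) := u^{2H} v^{2H} - (1/4)(u^{2H} + v^{2H} - |u-v|^{2H})²`. -/
noncomputable def phi (H u v : ℝ) : ℝ :=
  u ^ (2 * H) * v ^ (2 * H) - 1/4 * (u ^ (2 * H) + v ^ (2 * H) - |u - v| ^ (2 * H)) ^ 2

theorem ConcaveOn.add_sub_le_add_sub_of_le {s : Set ℝ} {f : ℝ → ℝ} (hf : ConcaveOn ℝ s f)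
    {x y h : ℝ} (hx : x ∈ s) (hyh : y + h ∈ s) (hxy : x ≤ y) (hh : 0 ≤ h) :
    f (y + h) - f y ≤ f (x + h) - f x := by
  rcases hxy.eq_or_lt with rfl | hxy
  · rfl
  have hd : 0 < y + h - x := by linarith
  -- `y` and `x + h` are convex combinations of `x` and `y + h` with swapped weights
  have hy := hf.2 hx hyh (show 0 ≤ (y - x) / (y + h - x) by bound)
    (show 0 ≤ h / (y + h - x) by positivity) (by field_simp; ring)
  have hxh := hf.2 hx hyh (show 0 ≤ h / (y + h - x) by positivity)
    (show 0 ≤ (y - x) / (y + h - x) by bound) (by field_simp; ring)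
  simp only [smul_eq_mul] at hy hxh
  rw [show (y - x) / (y + h - x) * x + h / (y + h - x) * (y + h) = x + h by field_simp; ring] at hy
  rw [show h / (y + h - x) * x + (y - x) / (y + h - x) * (y + h) = y by field_simp; ring] at hxh
  have hsum := add_le_add hy hxh
  field_simp at hsum
  have key : (y + h - x) * (f x + f (y + h)) ≤ (y + h - x) * (f (x + h) + f y) := by linarith
  linarith [le_of_mul_le_mul_left key hd]

theorem two_sub_two_rpow_mul_min_rpow_le {H a b : ℝ} (hH0 : 0 ≤ H) (hH1 : H ≤ 1)
    (ha : 0 ≤ a) (hb : 0 ≤ b) :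
    (2 - 2 ^ H) * min a b ^ H ≤ a ^ H + b ^ H - (a + b) ^ H := by
  wlog hba : b ≤ a generalizing a b
  · rw [min_comm, add_comm a, add_comm (a ^ H)]
    exact this hb ha (le_of_not_ge hba)
  have h := (concaveOn_rpow hH0 hH1).add_sub_le_add_sub_of_le hb (show a + b ∈ Ici 0 by
    simp only [mem_Ici]; positivity) hba hb
  simp only [← two_mul, mul_rpow zero_le_two hb] at h
  rw [min_eq_right hba]
  linarith

theorem phi_eq_mul {H u v : ℝ} (hv : 0 ≤ v) (hvu : v ≤ u) :
    phi H u v = ((u - v) ^ H + v ^ H - u ^ H) * ((u - v) ^ H + u ^ H - v ^ H) *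
      (u ^ H + v ^ H - (u - v) ^ H) * (u ^ H + v ^ H + (u - v) ^ H) / 4 := by
  have hsq : ∀ x : ℝ, 0 ≤ x → x ^ (2 * H) = (x ^ H) ^ 2 := fun x hx => by
    rw [mul_comm, rpow_mul hx, rpow_two]
  rw [phi, abs_of_nonneg (sub_nonneg.2 hvu), hsq u (hv.trans hvu), hsq v hv,
    hsq _ (sub_nonneg.2 hvu)]
  ring

theorem mul_rpow_le_phi {H u v : ℝ} (hH0 : 0 ≤ H) (hH1 : H ≤ 1) (hv : 0 ≤ v) (hvu : v ≤ u)
    (hu : u ≤ 1) (hu2 : 1 / 2 ≤ u) :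
    (2 - 2 ^ H) / 8 * (v * (u - v)) ^ (2 * H) ≤ phi H u v := by
  set s := u - v with hs_def
  have hs : 0 ≤ s := sub_nonneg.2 hvu
  have hc : 0 ≤ 2 - (2 : ℝ) ^ H := by
    linarith [rpow_le_rpow_of_exponent_le one_le_two hH1, rpow_one (2 : ℝ)]
  have hF1 : (2 - 2 ^ H) * (v * s) ^ H ≤ s ^ H + v ^ H - u ^ H := by
    have hmin : v * s ≤ min v s :=
      le_min (mul_le_of_le_one_right hv (by linarith)) (mul_le_of_le_one_left hs (by linarith))
    have h := two_sub_two_rpow_mul_min_rpow_le hH0 hH1 hv hs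
    rw [show v + s = u by ring] at h
    nlinarith [rpow_le_rpow (by positivity) hmin hH0]
  have hF2 : s ^ H ≤ s ^ H + u ^ H - v ^ H := by
    linarith [rpow_le_rpow hv hvu hH0]
  have hF3 : v ^ H ≤ u ^ H + v ^ H - s ^ H := by
    linarith [rpow_le_rpow hs (show s ≤ u by linarith) hH0]
  have hF4 : 1 / 2 ≤ u ^ H + v ^ H + s ^ H := by
    linarith [self_le_rpow_of_le_one (by linarith) hu hH1, rpow_nonneg hv H, rpow_nonneg hs H]
  rw [phi_eq_mul hv hvu, ← hs_def,
    show (v * s) ^ (2 * H) = (v * s) ^ H * s ^ H * v ^ H by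
      rw [two_mul, rpow_add_of_nonneg (by positivity) hH0 hH0, mul_rpow hv hs]; ring]
  calc (2 - 2 ^ H) / 8 * ((v * s) ^ H * s ^ H * v ^ H)
      = (2 - 2 ^ H) * (v * s) ^ H * s ^ H * v ^ H * (1 / 2) / 4 := by ring
    _ ≤ (s ^ H + v ^ H - u ^ H) * (s ^ H + u ^ H - v ^ H) * (u ^ H + v ^ H - s ^ H) *
        (u ^ H + v ^ H + s ^ H) / 4 := by
      have hF1₀ := (mul_nonneg hc (rpow_nonneg (mul_nonneg hv hs) H)).trans hF1
      have hF2₀ := (rpow_nonneg hs H).trans hF2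
      have hF3₀ := (rpow_nonneg hv H).trans hF3
      gcongr

theorem mul_le_cos_sub_sin {θ : ℝ} (hθ0 : -(π / 4) ≤ θ) (hθ : θ ≤ π / 4) :
    2 / π * (π / 4 - θ) ≤ cos θ - sin θ := by
  have hsin : sin (π / 4 - θ) * √2 = cos θ - sin θ := by
    rw [sin_sub, sin_pi_div_four, cos_pi_div_four]
    linear_combination (cos θ - sin θ) / 2 * mul_self_sqrt (zero_le_two : (0 : ℝ) ≤ 2)
  have hnonneg : 0 ≤ sin (π / 4 - θ) :=
    sin_nonneg_of_nonneg_of_le_pi (by linarith) (by linarith [pi_pos])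
  calc 2 / π * (π / 4 - θ) ≤ sin (π / 4 - θ) := mul_le_sin (by linarith) (by linarith)
    _ ≤ sin (π / 4 - θ) * √2 := le_mul_of_one_le_right hnonneg (one_le_sqrt.2 one_le_two)
    _ = cos θ - sin θ := hsin

theorem mul_rpow_le_of_nonpos {a b r : ℝ} (ha : 0 < a) (hb : 0 < b) (hr : r ≤ 0) :
    (a * b) ^ r ≤ ((a + b) / 2) ^ r * (a ^ r + b ^ r) := by
  wlog hab : a ≤ b generalizing a b
  · rw [mul_comm, add_comm a, add_comm (a ^ r)]
    exact this hb ha (le_of_not_ge hab)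
  calc (a * b) ^ r ≤ (a * ((a + b) / 2)) ^ r :=
        rpow_le_rpow_of_nonpos (by positivity) (by gcongr; linarith) hr
    _ = ((a + b) / 2) ^ r * a ^ r := by rw [mul_rpow ha.le (by positivity), mul_comm]
    _ ≤ ((a + b) / 2) ^ r * (a ^ r + b ^ r) := by gcongr; linarith [rpow_nonneg hb.le r]

theorem integrableOn_mul_sub_rpow {T r : ℝ} (hr : -1 < r) (hr0 : r ≤ 0) :
    IntegrableOn (fun x => (x * (T - x)) ^ r) (Ioo 0 T) := by
  have hleft : IntegrableOn (fun x => x ^ r) (Ioo 0 T) :=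
    (intervalIntegral.intervalIntegrable_rpow' hr).1.mono_set Ioo_subset_Ioc_self
  have hright : IntegrableOn (fun x => (T - x) ^ r) (Ioo 0 T) := by
    have h := (intervalIntegral.intervalIntegrable_rpow' hr (a := T) (b := 0)).comp_sub_left T
    simp only [sub_self, sub_zero] at h
    exact h.1.mono_set Ioo_subset_Ioc_self
  refine Integrable.mono' ((hleft.add hright).const_mul ((T / 2) ^ r))
    (by fun_prop : Measurable fun x => (x * (T - x)) ^ r).aestronglyMeasurable ?_
  rw [ae_restrict_iff' measurableSet_Ioo]
  refine ae_of_all _ fun x ⟨hx0, hxT⟩ => ?_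
  have h := mul_rpow_le_of_nonpos hx0 (sub_pos.2 hxT) hr0
  rw [add_sub_cancel] at h
  rwa [norm_of_nonneg (rpow_nonneg (mul_pos hx0 (sub_pos.2 hxT)).le r)]

theorem phi_cos_sin_rpow_le {H p θ : ℝ} (hH0 : 0 < H) (hH1 : H < 1) (hp : p ≤ 0)
    (hθ : θ ∈ Ioo 0 (π / 4)) :
    phi H (cos θ) (sin θ) ^ p ≤
      ((2 - 2 ^ H) / 8) ^ p * ((2 / π) ^ 2) ^ (2 * H * p) * (θ * (π / 4 - θ)) ^ (2 * H * p) := by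
  obtain ⟨hθ0, hθT⟩ := hθ
  have hsin := mul_le_sin hθ0.le (by linarith [pi_pos])
  have hdiff := mul_le_cos_sub_sin (by linarith) hθT.le
  have hθT' : 0 < π / 4 - θ := sub_pos.2 hθT
  have hsin0 : 0 < sin θ := (by positivity : 0 < 2 / π * θ).trans_le hsin
  have hsin_le : sin θ ≤ cos θ := by linarith [(by positivity : 0 < 2 / π * (π / 4 - θ))]
  have hprod : (2 / π) ^ 2 * (θ * (π / 4 - θ)) ≤ sin θ * (cos θ - sin θ) :=
    calc (2 / π) ^ 2 * (θ * (π / 4 - θ)) = 2 / π * θ * (2 / π * (π / 4 - θ)) := by ring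
      _ ≤ sin θ * (cos θ - sin θ) := by gcongr
  have hcos : 1 / 2 ≤ cos θ := by
    have : 2 / π * θ + 2 / π * (π / 4 - θ) = 1 / 2 := by field_simp; ring
    linarith
  have hκ : 0 < (2 - (2 : ℝ) ^ H) / 8 := by
    linarith [rpow_lt_rpow_of_exponent_lt one_lt_two hH1, rpow_one (2 : ℝ)]
  have hlow : (2 - 2 ^ H) / 8 * ((2 / π) ^ 2 * (θ * (π / 4 - θ))) ^ (2 * H) ≤
      phi H (cos θ) (sin θ) := by
    refine le_trans ?_ (mul_rpow_le_phi hH0.le hH1.le hsin0.le hsin_le (cos_le_one θ) hcos)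
    gcongr
  calc phi H (cos θ) (sin θ) ^ p
      ≤ ((2 - 2 ^ H) / 8 * ((2 / π) ^ 2 * (θ * (π / 4 - θ))) ^ (2 * H)) ^ p :=
        rpow_le_rpow_of_nonpos (by positivity) hlow hp
    _ = _ := by
      rw [mul_rpow hκ.le (by positivity), ← rpow_mul (by positivity),
        mul_rpow (by positivity) (by positivity), ← mul_assoc]

/-- For `H ∈ (0,1)` and `0 < ε < 1/(2H)`,
`∫₀^{π/4} φ_H(cos θ, sin θ)^{ε - 1/(2H)} dθ < ∞`. -/
theorem angular_integral_finite (H ε : ℝ) (hH : H ∈ Ioo (0:ℝ) 1)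
    (hε0 : 0 < ε) (hε : ε < 1 / (2 * H)) :
    (∫⁻ θ in Ioo (0:ℝ) (π / 4),
        ENNReal.ofReal ((phi H (Real.cos θ) (Real.sin θ)) ^ (ε - 1 / (2 * H)))) < ⊤ := by
  obtain ⟨hH0, hH1⟩ := hH
  set p := ε - 1 / (2 * H)
  have hp : p ≤ 0 := by simp only [p]; linarith
  have hq : 2 * H * p = 2 * H * ε - 1 := by simp only [p]; field_simp
  calc (∫⁻ θ in Ioo 0 (π / 4), ENNReal.ofReal (phi H (cos θ) (sin θ) ^ p))
      ≤ ∫⁻ θ in Ioo 0 (π / 4), ENNReal.ofReal (((2 - 2 ^ H) / 8) ^ p *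
          ((2 / π) ^ 2) ^ (2 * H * p) * (θ * (π / 4 - θ)) ^ (2 * H * p)) :=
        setLIntegral_mono' measurableSet_Ioo fun θ hθ =>
          ENNReal.ofReal_le_ofReal (phi_cos_sin_rpow_le hH0 hH1 hp hθ)
    _ < ⊤ := IntegrableOn.setLIntegral_lt_top <| Integrable.const_mul
        (integrableOn_mul_sub_rpow (by rw [hq]; linarith [mul_pos (mul_pos two_pos hH0) hε0])
          (mul_nonpos_of_nonneg_of_nonpos (by positivity) hp)) _
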